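/- Let R be a finite Frobenius ring and g ∈ R^k nonzero. Then Σ_{x ∈ R^k} w_hom(x·g)² = |R|^k + |R|^k / |gR^×|, where gR^× = {gu : u ∈ R^×}. -/

import Mathlib

open scoped Classical

/-- The normalized homogeneous weight defined from an additive character. -/
noncomputable def whom {R : Type} [Ring R] [Fintype R] (χ : AddChar R ℂ) (x : R) : ℂ :=
  1 - (Fintype.card Rˣ : ℂ)⁻¹ * ∑ u : Rˣ, χ ((u : R) * x)

/-- A generating character: a character of `(R,+)` whose kernel contains no
nonzero left ideal. -/
def IsGenChar {R : Type} [Ring R] [Fintype R] (χ : AddChar R ℂ) : Prop :=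
  ∀ I : Ideal R, I ≠ ⊥ → ∃ x ∈ I, χ x ≠ 1

/-!
The Nakayama automorphism `σ` of `R`, characterised by `χ (a * x) = χ (x * σ a)`, permutes the
units, so `∑ u, χ (u * y) = ∑ u, χ (y * u)`. After expanding the square, orthogonality gives
`∑ x, χ ((x ⬝ᵥ g) * t) = |R|^k` if `g t = 0` and `0` otherwise. The linear term therefore
vanishes (`g u ≠ 0` for a unit `u`), and the quadratic term counts the pairs of units `(u, v)`
with `g u = g v`: the fibres of `u ↦ g u` are cosets of the stabiliser of `g`, so there are
`|Rˣ|² / |g Rˣ|` of them.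
-/

open Finset Function

namespace AddChar

variable {R M : Type*} [Ring R] [CommMonoid M]

def mulShiftRight (ψ : AddChar R M) (r : R) : AddChar R M :=
  ψ.compAddMonoidHom (AddMonoidHom.mulRight r)

@[simp] lemma mulShiftRight_apply (ψ : AddChar R M) (r x : R) :
    ψ.mulShiftRight r x = ψ (x * r) := rfl

lemma mulShiftRight_add (ψ : AddChar R M) (r s : R) :
    ψ.mulShiftRight (r + s) = ψ.mulShiftRight r * ψ.mulShiftRight s := by
  ext x
  simp [mul_add, map_add_eq_mul]

end AddChar

theorem card_filter_apply_eq_apply_mul_card_image {G X : Type*} [Group G] [Fintype G]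
    [DecidableEq X] (φ : G → X) (hφ : ∀ a b c, φ (a * c) = φ (b * c) ↔ φ a = φ b) :
    #{p : G × G | φ p.1 = φ p.2} * #(univ.image φ) = Fintype.card G ^ 2 := by
  set H := #{u | φ u = φ 1}
  have hfiber (v : G) : #{u | φ u = φ v} = H :=
    card_equiv (Equiv.mulRight v⁻¹) fun u => by simp [← hφ (u * v⁻¹) 1 v]
  have hpairs : #{p : G × G | φ p.1 = φ p.2} = Fintype.card G * H := by
    rw [card_filter, Fintype.sum_prod_type_right]
    simp_rw [← card_filter, hfiber, sum_const, card_univ, smul_eq_mul]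
  have himage : Fintype.card G = #(univ.image φ) * H := by
    rw [← card_univ, card_eq_sum_card_image φ univ, sum_const_nat]
    rintro _ hb
    obtain ⟨v, -, rfl⟩ := mem_image.1 hb
    exact hfiber v
  rw [hpairs, himage]
  ring

namespace IsGenChar

variable {R : Type} [Ring R] [Fintype R] {χ : AddChar R ℂ}

lemma exists_mul_ne_one (hχ : IsGenChar χ) {b : R} (hb : b ≠ 0) : ∃ a, χ (a * b) ≠ 1 := by
  obtain ⟨x, hx, hχx⟩ := hχ (Ideal.span {b}) (by simpa [Ideal.span_singleton_eq_bot] using hb)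
  obtain ⟨a, rfl⟩ := Ideal.mem_span_singleton'.1 hx
  exact ⟨a, hχx⟩

lemma mulShiftRight_injective (hχ : IsGenChar χ) : Injective χ.mulShiftRight := by
  intro b b' h
  by_contra hne
  obtain ⟨a, ha⟩ := hχ.exists_mul_ne_one (sub_ne_zero.2 hne)
  have : χ.mulShiftRight (b - b') = 1 := mul_right_cancel (b := χ.mulShiftRight b') <| by
    rw [← AddChar.mulShiftRight_add, sub_add_cancel, h, one_mul]
  exact ha (by simpa using DFunLike.congr_fun this a)

lemma mulShiftRight_bijective (hχ : IsGenChar χ) : Bijective χ.mulShiftRight := by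
  rw [Fintype.bijective_iff_injective_and_card, AddChar.card_eq]
  exact ⟨hχ.mulShiftRight_injective, rfl⟩

noncomputable def nakayamaFun (hχ : IsGenChar χ) (a : R) : R :=
  (Equiv.ofBijective _ hχ.mulShiftRight_bijective).symm (χ.mulShift a)

lemma mulShiftRight_nakayamaFun (hχ : IsGenChar χ) (a : R) :
    χ.mulShiftRight (hχ.nakayamaFun a) = χ.mulShift a :=
  (Equiv.ofBijective _ hχ.mulShiftRight_bijective).apply_symm_apply _

lemma apply_mul_nakayamaFun (hχ : IsGenChar χ) (a x : R) :
    χ (x * hχ.nakayamaFun a) = χ (a * x) :=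
  DFunLike.congr_fun (hχ.mulShiftRight_nakayamaFun a) x

lemma nakayamaFun_eq_iff (hχ : IsGenChar χ) {a b : R} :
    hχ.nakayamaFun a = b ↔ ∀ x, χ (a * x) = χ (x * b) := by
  rw [← hχ.mulShiftRight_injective.eq_iff, hχ.mulShiftRight_nakayamaFun, DFunLike.ext_iff]
  rfl

noncomputable def nakayamaHom (hχ : IsGenChar χ) : R →+* R where
  toFun := hχ.nakayamaFun
  map_one' := hχ.nakayamaFun_eq_iff.2 fun x => by rw [one_mul, mul_one]
  map_zero' := hχ.nakayamaFun_eq_iff.2 fun x => by rw [zero_mul, mul_zero]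
  map_add' a b := hχ.nakayamaFun_eq_iff.2 fun x => by
    rw [add_mul, mul_add, AddChar.map_add_eq_mul, AddChar.map_add_eq_mul,
      apply_mul_nakayamaFun, apply_mul_nakayamaFun]
  map_mul' a b := hχ.nakayamaFun_eq_iff.2 fun x => by
    rw [← mul_assoc, hχ.apply_mul_nakayamaFun, ← mul_assoc, hχ.apply_mul_nakayamaFun,
      mul_assoc]

lemma nakayamaHom_injective (hχ : IsGenChar χ) : Injective hχ.nakayamaHom := by
  rw [RingHom.injective_iff_ker_eq_bot]
  by_contra hne
  obtain ⟨a, ha, hχa⟩ := hχ _ hne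
  apply hχa
  rw [← mul_one a, ← hχ.apply_mul_nakayamaFun, show hχ.nakayamaFun a = 0 from ha,
    mul_zero, AddChar.map_zero_eq_one]

noncomputable def nakayama (hχ : IsGenChar χ) : R ≃+* R :=
  RingEquiv.ofBijective hχ.nakayamaHom (Finite.injective_iff_bijective.1 hχ.nakayamaHom_injective)

lemma apply_mul_nakayama (hχ : IsGenChar χ) (a x : R) : χ (x * hχ.nakayama a) = χ (a * x) :=
  hχ.apply_mul_nakayamaFun a x

lemma sum_units_apply_mul_comm (hχ : IsGenChar χ) (y : R) :
    ∑ u : Rˣ, χ (u * y) = ∑ u : Rˣ, χ (y * u) :=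
  Fintype.sum_equiv (Units.mapEquiv hχ.nakayama.toMulEquiv) _ _ fun u =>
    (hχ.apply_mul_nakayama u y).symm

variable {ι : Type*} [Fintype ι] [DecidableEq ι]

lemma sum_apply_dotProduct (hχ : IsGenChar χ) (h : ι → R) :
    ∑ x : ι → R, χ (x ⬝ᵥ h) =
      if h = 0 then (Fintype.card R : ℂ) ^ Fintype.card ι else 0 := by
  let ψ : AddChar (ι → R) ℂ := χ.compAddMonoidHom
    { toFun := (· ⬝ᵥ h), map_zero' := zero_dotProduct h, map_add' := (add_dotProduct · · h) }
  have hψ : ψ = 0 ↔ h = 0 := by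
    refine ⟨fun hψ => ?_, fun h0 => AddChar.eq_zero_iff.2 fun x => by simp [ψ, h0]⟩
    by_contra hne
    obtain ⟨i, hi⟩ := Function.ne_iff.1 hne
    obtain ⟨a, ha⟩ := hχ.exists_mul_ne_one hi
    apply ha
    simpa [ψ] using AddChar.eq_zero_iff.1 hψ (Pi.single i a)
  change ∑ x, ψ x = _
  rw [AddChar.sum_eq_ite, Fintype.card_fun]
  simp only [hψ, Nat.cast_pow]

lemma sum_apply_dotProduct_mul (hχ : IsGenChar χ) (g : ι → R) (t : R) :
    ∑ x : ι → R, χ ((x ⬝ᵥ g) * t) =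
      if (fun i => g i * t) = 0 then (Fintype.card R : ℂ) ^ Fintype.card ι else 0 := by
  simp_rw [← hχ.sum_apply_dotProduct (fun i => g i * t), dotProduct, sum_mul, mul_assoc]

lemma sum_sq_sum_units_apply_dotProduct_mul (hχ : IsGenChar χ) (g : ι → R) :
    ∑ x : ι → R, (∑ u : Rˣ, χ ((x ⬝ᵥ g) * u)) ^ 2 =
      #{p : Rˣ × Rˣ | (fun i => g i * p.1) = fun i => g i * p.2} *
        (Fintype.card R : ℂ) ^ Fintype.card ι := by
  have hpair (u v : Rˣ) :
      ∑ x : ι → R, χ ((x ⬝ᵥ g) * u) * χ ((x ⬝ᵥ g) * (-v : Rˣ)) =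
        if (fun i => g i * u) = fun i => g i * v
        then (Fintype.card R : ℂ) ^ Fintype.card ι else 0 := by
    simp_rw [← AddChar.map_add_eq_mul, ← mul_add, hχ.sum_apply_dotProduct_mul, funext_iff,
      Pi.zero_apply, Units.val_neg, ← sub_eq_add_neg, mul_sub, sub_eq_zero]
  calc ∑ x : ι → R, (∑ u : Rˣ, χ ((x ⬝ᵥ g) * u)) ^ 2
      = ∑ u : Rˣ, ∑ v : Rˣ, ∑ x : ι → R,
          χ ((x ⬝ᵥ g) * u) * χ ((x ⬝ᵥ g) * (-v : Rˣ)) := by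
        simp_rw [sq, sum_mul_sum]
        rw [sum_comm]
        refine sum_congr rfl fun u _ => ?_
        rw [sum_comm, ← Equiv.sum_comp (Equiv.neg Rˣ)]
        rfl
    _ = _ := by
        simp_rw [hpair, ← Fintype.sum_prod_type', sum_ite, sum_const_zero, add_zero, sum_const,
          nsmul_eq_mul]

end IsGenChar

/-- For nonzero `g ∈ R^k`:
`Σ_{x ∈ R^k} w_hom(x·g)² = |R|^k + |R|^k / |gR^×|`, where
`gR^× = {gu : u ∈ R^×}`. -/
theorem sum_whom_dot_sq {R : Type} [Ring R] [Fintype R]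
    (χ : AddChar R ℂ) (hχ : IsGenChar χ)
    (k : ℕ) (g : Fin k → R) (hg : g ≠ 0) :
    ∑ x : Fin k → R, (whom χ (∑ i, x i * g i)) ^ 2 =
      (Fintype.card R : ℂ) ^ k +
        (Fintype.card R : ℂ) ^ k /
          ((Finset.image (fun u : Rˣ => fun i => g i * (u : R)) Finset.univ).card : ℂ) := by
  set S : R → ℂ := fun y => ∑ u : Rˣ, χ (y * u)
  have hwhom (y : R) : whom χ y = 1 - (Fintype.card Rˣ : ℂ)⁻¹ * S y := by
    rw [whom, hχ.sum_units_apply_mul_comm]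
  have hlin : ∑ x : Fin k → R, S (x ⬝ᵥ g) = 0 := by
    rw [sum_comm]
    refine sum_eq_zero fun u _ => ?_
    rw [hχ.sum_apply_dotProduct_mul, if_neg]
    exact fun h => hg (funext fun i => (Units.mul_left_eq_zero u).1 (congr_fun h i))
  have hcount : (#{p : Rˣ × Rˣ | (fun i => g i * p.1) = fun i => g i * p.2} : ℂ) *
      #(univ.image fun u : Rˣ => fun i => g i * (u : R)) = (Fintype.card Rˣ : ℂ) ^ 2 := by
    exact_mod_cast card_filter_apply_eq_apply_mul_card_image
      (fun u : Rˣ => fun i => g i * (u : R))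
      fun a b c => by simp_rw [funext_iff, Units.val_mul, ← mul_assoc, Units.mul_left_inj]
  have hunits : (Fintype.card Rˣ : ℂ) ≠ 0 := Nat.cast_ne_zero.2 Fintype.card_ne_zero
  have himage : ((univ.image fun u : Rˣ => fun i => g i * (u : R)).card : ℂ) ≠ 0 := by
    exact_mod_cast (univ_nonempty.image _).card_ne_zero
  change ∑ x : Fin k → R, whom χ (x ⬝ᵥ g) ^ 2 = _
  calc ∑ x : Fin k → R, whom χ (x ⬝ᵥ g) ^ 2
      = ∑ x : Fin k → R, (1 - 2 * (Fintype.card Rˣ : ℂ)⁻¹ * S (x ⬝ᵥ g) +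
          (Fintype.card Rˣ : ℂ)⁻¹ ^ 2 * S (x ⬝ᵥ g) ^ 2) :=
        sum_congr rfl fun x _ => by rw [hwhom]; ring
    _ = _ := by
        rw [sum_add_distrib, sum_sub_distrib, ← mul_sum, ← mul_sum, hlin,
          hχ.sum_sq_sum_units_apply_dotProduct_mul, sum_const, card_univ, Fintype.card_fun,
          Fintype.card_fin, nsmul_eq_mul, mul_one, mul_zero, sub_zero, Nat.cast_pow]
        field_simp
        linear_combination hcount
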